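/- Let l be a prelogarithmic section of k((G)), let h ∈ G with h > 1, and let H := {h^n : n ∈ ℤ} be the cyclic subgroup generated by h. Then H satisfies the growth axiom if and only if v(l(h)) < h in G. -/

import Mathlib

/-! Common framework: fields of generalized power series `k((G))` over a multiplicative
linearly ordered abelian group `G`, realized as Mathlib Hahn series over the additive
order-dual of `G` (so that anti well-ordered supports in `G` become partially
well-ordered supports), with the anti-lexicographic order. -/

noncomputable section
open HahnSeries
open scoped Classical

/-- The additive order-dual copy of the multiplicative group `G`:
anti well-ordered subsets of `G` correspond to well-ordered subsets of `gdual G`. -/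
abbrev gdual (G : Type*) [CommGroup G] [LinearOrder G] [IsOrderedMonoid G] : Type _ := Additive Gᵒᵈ

/-- View an element of `G` as an exponent (element of `gdual G`). -/
def toGd {G : Type*} [CommGroup G] [LinearOrder G] [IsOrderedMonoid G] (g : G) : gdual G :=
  Additive.ofMul (OrderDual.toDual g)

/-- View an exponent (element of `gdual G`) as an element of `G`. -/
def toG {G : Type*} [CommGroup G] [LinearOrder G] [IsOrderedMonoid G] (γ : gdual G) : G :=
  OrderDual.ofDual (Additive.toMul γ)

section HahnOrder

variable {k : Type*} [Field k] [LinearOrder k] [IsStrictOrderedRing k] {Γ' : Type*} [LinearOrder Γ']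

theorem hahn_leadingCoeff_neg (x : HahnSeries Γ' k) : (-x).leadingCoeff = -x.leadingCoeff := by
  by_cases h : x = 0
  · simp [h]
  · have hn : (-x) ≠ 0 := neg_ne_zero.2 h
    rw [HahnSeries.leadingCoeff_of_ne_zero h, HahnSeries.leadingCoeff_of_ne_zero hn,
      (WithTop.untop_eq_iff _).mpr (HahnSeries.orderTop_of_ne_zero h),
      (WithTop.untop_eq_iff _).mpr (HahnSeries.orderTop_of_ne_zero hn)]
    have hmin : (-x).isWF_support.min (HahnSeries.support_nonempty_iff.2 hn)
        = x.isWF_support.min (HahnSeries.support_nonempty_iff.2 h) := by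
      apply le_antisymm
      · exact Set.IsWF.min_le _ _ (by
          rw [HahnSeries.support_neg (x := x)]
          exact x.isWF_support.min_mem (HahnSeries.support_nonempty_iff.2 h))
      · refine Set.IsWF.min_le _ _ ?_
        rw [← HahnSeries.support_neg (x := x)]
        exact (-x).isWF_support.min_mem (HahnSeries.support_nonempty_iff.2 hn)
    rw [hmin, HahnSeries.coeff_neg]

theorem hahn_leadingCoeff_add_pos {a b : HahnSeries Γ' k}
    (ha : 0 < a.leadingCoeff) (hb : 0 < b.leadingCoeff) : 0 < (a + b).leadingCoeff := by
  have key : ∀ x y : HahnSeries Γ' k, 0 < x.leadingCoeff → 0 < y.leadingCoeff →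
      ∀ (hx0 : x ≠ 0) (hy0 : y ≠ 0),
      x.isWF_support.min (HahnSeries.support_nonempty_iff.2 hx0) ≤
        y.isWF_support.min (HahnSeries.support_nonempty_iff.2 hy0) →
      0 < (x + y).leadingCoeff := by
    intro x y hx hy hx0 hy0 hle
    set mx := x.isWF_support.min (HahnSeries.support_nonempty_iff.2 hx0) with hmx
    set my := y.isWF_support.min (HahnSeries.support_nonempty_iff.2 hy0) with hmy
    have hcx : x.coeff mx = x.leadingCoeff := by
        rw [HahnSeries.leadingCoeff_of_ne_zero hx0,
        (WithTop.untop_eq_iff _).mpr (HahnSeries.orderTop_of_ne_zero hx0)]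
    have hcoeff : 0 < (x + y).coeff mx := by
      rcases lt_or_eq_of_le hle with hlt | heq
      · have hny : y.coeff mx = 0 := by
          by_contra hc
          exact absurd (Set.IsWF.min_le _ _ (by rwa [HahnSeries.mem_support])) (not_le.2 hlt)
        rw [HahnSeries.coeff_add, hny, add_zero, hcx]; exact hx
      · have hcy : y.coeff mx = y.leadingCoeff := by
          rw [heq, HahnSeries.leadingCoeff_of_ne_zero hy0,
        (WithTop.untop_eq_iff _).mpr (HahnSeries.orderTop_of_ne_zero hy0)]
        rw [HahnSeries.coeff_add, hcx, hcy]; exact add_pos hx hy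
    have hmem : mx ∈ (x + y).support := by
      rw [HahnSeries.mem_support]; exact ne_of_gt hcoeff
    have hxy0 : x + y ≠ 0 := HahnSeries.support_nonempty_iff.1 ⟨mx, hmem⟩
    have hminxy : (x + y).isWF_support.min (HahnSeries.support_nonempty_iff.2 hxy0) = mx := by
      apply le_antisymm (Set.IsWF.min_le _ _ hmem)
      have hmm := (x + y).isWF_support.min_mem (HahnSeries.support_nonempty_iff.2 hxy0)
      rcases HahnSeries.support_add_subset _ _ hmm with hmem' | hmem'
      · exact Set.IsWF.min_le _ _ hmem'
      · exact le_trans hle (Set.IsWF.min_le _ _ hmem')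
    rw [HahnSeries.leadingCoeff_of_ne_zero hxy0,
        (WithTop.untop_eq_iff _).mpr (HahnSeries.orderTop_of_ne_zero hxy0), hminxy]
    exact hcoeff
  have ha0 : a ≠ 0 := by intro h; rw [h] at ha; simp at ha
  have hb0 : b ≠ 0 := by intro h; rw [h] at hb; simp at hb
  rcases le_total (a.isWF_support.min (HahnSeries.support_nonempty_iff.2 ha0))
      (b.isWF_support.min (HahnSeries.support_nonempty_iff.2 hb0)) with hle | hle
  · exact key a b ha hb ha0 hb0 hle
  · rw [add_comm]; exact key b a hb ha hb0 ha0 hle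

/-- The anti-lexicographic linear order on generalized power series:
`x` is positive iff its leading coefficient (the coefficient at the valuation `v x`,
i.e. at the largest element of the support) is positive. -/
instance instHahnLinearOrder : LinearOrder (HahnSeries Γ' k) where
  le x y := x = y ∨ 0 < (y - x).leadingCoeff
  lt x y := 0 < (y - x).leadingCoeff
  le_refl x := Or.inl rfl
  le_trans x y z hxy hyz := by
    rcases hxy with rfl | hxy
    · exact hyz
    rcases hyz with rfl | hyz
    · exact Or.inr hxy
    · refine Or.inr ?_
      have := hahn_leadingCoeff_add_pos hyz hxy
      rwa [sub_add_sub_cancel] at this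
  le_antisymm x y hxy hyx := by
    rcases hxy with rfl | hxy
    · rfl
    rcases hyx with rfl | hyx
    · rfl
    · exfalso
      have h1 : (x - y).leadingCoeff = -(y - x).leadingCoeff := by
        rw [← hahn_leadingCoeff_neg, neg_sub]
      rw [h1] at hyx
      exact absurd hxy (not_lt.2 (le_of_lt (neg_pos.1 hyx)))
  lt_iff_le_not_ge x y := by
    constructor
    · intro h
      refine ⟨Or.inr h, ?_⟩
      rintro (rfl | h')
      · change 0 < (y - y).leadingCoeff at h
        rw [sub_self] at h
        simp at h
      · have h1 : (x - y).leadingCoeff = -(y - x).leadingCoeff := by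
          rw [← hahn_leadingCoeff_neg, neg_sub]
        rw [h1] at h'
        exact absurd h (not_lt.2 (le_of_lt (neg_pos.1 h')))
    · rintro ⟨hle, hnot⟩
      rcases hle with rfl | h
      · exact absurd (Or.inl rfl) hnot
      · exact h
  le_total x y := by
    by_cases h : x = y
    · exact Or.inl (Or.inl h)
    · have h0 : y - x ≠ 0 := sub_ne_zero.2 (Ne.symm h)
      have hlc : (y - x).leadingCoeff ≠ 0 := HahnSeries.leadingCoeff_ne_zero.2 h0
      rcases lt_or_gt_of_ne hlc with hneg | hpos
      · refine Or.inr (Or.inr ?_)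
        rw [show x - y = -(y - x) from (neg_sub y x).symm, hahn_leadingCoeff_neg]
        exact neg_pos.2 hneg
      · exact Or.inl (Or.inr hpos)
  toDecidableLE := fun _ _ => Classical.dec _

/-- With the anti-lexicographic order, `k((G))` is a linearly ordered abelian group. -/
instance instHahnLOACG : IsOrderedAddMonoid (HahnSeries Γ' k) where
  add_le_add_left := by
    intro x y hxy c
    rcases hxy with rfl | h
    · exact le_refl _
    · exact Or.inr (by rwa [add_sub_add_right_eq_sub])

theorem hahn_lt_iff (x y : HahnSeries Γ' k) : x < y ↔ 0 < (y - x).leadingCoeff := Iff.rfl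

theorem hahn_single_pos (a : Γ') : (0 : HahnSeries Γ' k) < HahnSeries.single a 1 := by
  rw [hahn_lt_iff, sub_zero, HahnSeries.leadingCoeff_of_single]
  exact one_pos

theorem hahn_single_lt_single {a b : Γ'} (hab : b < a) :
    (HahnSeries.single a 1 : HahnSeries Γ' k) < HahnSeries.single b 1 := by
  rw [hahn_lt_iff]
  set δ : HahnSeries Γ' k := HahnSeries.single b 1 - HahnSeries.single a 1 with hδdef
  have hne : b ≠ a := ne_of_lt hab
  have hb : δ.coeff b = 1 := by
    rw [hδdef, HahnSeries.coeff_sub, HahnSeries.coeff_single_same,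
      HahnSeries.coeff_single_of_ne hne, sub_zero]
  have hbmem : b ∈ δ.support := by rw [HahnSeries.mem_support, hb]; exact one_ne_zero
  have hδ : δ ≠ 0 := HahnSeries.support_nonempty_iff.1 ⟨b, hbmem⟩
  have hsub : δ.support ⊆ {b, a} := by
    intro γ hγ
    rw [HahnSeries.mem_support] at hγ
    by_contra hγ'
    simp only [Set.mem_insert_iff, Set.mem_singleton_iff, not_or] at hγ'
    apply hγ
    rw [hδdef, HahnSeries.coeff_sub, HahnSeries.coeff_single_of_ne hγ'.1,
      HahnSeries.coeff_single_of_ne hγ'.2, sub_zero]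
  have hmin : δ.isWF_support.min (HahnSeries.support_nonempty_iff.2 hδ) = b := by
    have hmem := δ.isWF_support.min_mem (HahnSeries.support_nonempty_iff.2 hδ)
    have hle := δ.isWF_support.min_le (HahnSeries.support_nonempty_iff.2 hδ) hbmem
    rcases hsub hmem with h | h
    · exact h
    · exact absurd (h ▸ hle) (not_le.2 hab)
  rw [HahnSeries.leadingCoeff_of_ne_zero hδ,
        (WithTop.untop_eq_iff _).mpr (HahnSeries.orderTop_of_ne_zero hδ), hmin, hb]
  exact one_pos

end HahnOrder

section Series

variable {k : Type*} [Field k] [LinearOrder k] [IsStrictOrderedRing k] {G : Type*} [CommGroup G] [LinearOrder G] [IsOrderedMonoid G]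

/-- The summable family `n ↦ (-1)^n/(n+1) • ε^(n+1)` (`ε` of positive order). -/
def logFamily (ε : HahnSeries (gdual G) k) (hε : 0 < ε.orderTop) :
    HahnSeries.SummableFamily (gdual G) k ℕ where
  toFun n := ((-1 : k) ^ n / ((n : k) + 1)) • ε ^ (n + 1)
  isPWO_iUnion_support' := by
    refine ((HahnSeries.SummableFamily.powers ε).isPWO_iUnion_support).mono ?_
    intro γ hγ
    rw [Set.mem_iUnion] at hγ ⊢
    obtain ⟨n, hn⟩ := hγ
    refine ⟨n + 1, ?_⟩
    rw [HahnSeries.mem_support] at hn ⊢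
    intro h
    rw [HahnSeries.SummableFamily.powers_of_orderTop_pos hε] at h
    apply hn
    show (((-1 : k) ^ n / ((n : k) + 1)) • ε ^ (n + 1)).coeff γ = 0
    rw [HahnSeries.coeff_smul]
    show ((-1 : k) ^ n / ((n : k) + 1)) • (ε ^ (n + 1)).coeff γ = 0
    rw [show (ε ^ (n + 1)).coeff γ = 0 from h, smul_zero]
  finite_co_support' g := by
    have h := (HahnSeries.SummableFamily.powers ε).finite_co_support g
    refine Set.Finite.subset (h.preimage (Set.injOn_of_injective Nat.succ_injective)) ?_
    intro n hn
    simp only [Set.mem_preimage, Set.mem_setOf_eq] at hn ⊢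
    intro h0
    apply hn
    show (((-1 : k) ^ n / ((n : k) + 1)) • ε ^ (n + 1)).coeff g = 0
    rw [HahnSeries.coeff_smul]
    have : ((HahnSeries.SummableFamily.powers ε) (Nat.succ n)).coeff g = 0 := h0
    rw [HahnSeries.SummableFamily.powers_of_orderTop_pos hε] at this
    rw [show (ε ^ (n + 1)).coeff g = 0 from this, smul_zero]

/-- The logarithm on 1-units: `1 + ε ↦ Σ_{i ≥ 1} (-1)^(i-1) ε^i / i`
(for `ε` supported on `G^{<1}`; junk value `0` otherwise). -/
def logOneUnit (ε : HahnSeries (gdual G) k) : HahnSeries (gdual G) k :=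
  if hε : 0 < ε.orderTop then (logFamily ε hε).hsum else 0

/-- The canonical extension of an order-preserving embedding `ψ : G₁ → G₂` to the fields of
generalized power series, applying `ψ` to every monomial (junk value `0` if `ψ` is not
order-preserving). -/
def extMap {k : Type*} [Field k] [LinearOrder k] [IsStrictOrderedRing k] {G₁ G₂ : Type*} [CommGroup G₁] [LinearOrder G₁] [IsOrderedMonoid G₁]
    [CommGroup G₂] [LinearOrder G₂] [IsOrderedMonoid G₂] (ψ : G₁ → G₂) :
    HahnSeries (gdual G₁) k → HahnSeries (gdual G₂) k :=
  if h : StrictMono ψ then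
    HahnSeries.embDomain
      (OrderEmbedding.ofStrictMono (fun γ => toGd (ψ (toG γ)))
        (fun a b hab => show toGd (ψ (toG a)) < toGd (ψ (toG b)) from
          h (show toG b < toG a from hab)))
  else fun _ => 0

/-- The additive subgroup `k((G^{>1}))` of the series supported on `G^{>1}`. -/
def largeSeries (k : Type*) [Field k] [LinearOrder k] [IsStrictOrderedRing k] (G : Type*) [CommGroup G] [LinearOrder G] [IsOrderedMonoid G] :
    AddSubgroup (HahnSeries (gdual G) k) where
  carrier := {f | ∀ γ ∈ f.support, γ < (0 : gdual G)}
  zero_mem' := by intro γ hγ; rw [HahnSeries.support_zero] at hγ; exact absurd hγ (Set.notMem_empty γ)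
  add_mem' := by
    intro a b ha hb γ hγ
    rcases HahnSeries.support_add_subset _ _ hγ with h | h
    exacts [ha γ h, hb γ h]
  neg_mem' := by
    intro a ha γ hγ
    rw [HahnSeries.support_neg] at hγ
    exact ha γ hγ

theorem mem_largeSeries {f : HahnSeries (gdual G) k} :
    f ∈ largeSeries k G ↔ ∀ γ ∈ f.support, γ < (0 : gdual G) := Iff.rfl

/-- `log : (k^{>0}, ·) → (k, +)` is an order-preserving group embedding. -/
structure IsResidueLog (lg : k → k) : Prop where
  map_mul : ∀ a b : k, 0 < a → 0 < b → lg (a * b) = lg a + lg b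
  strictMonoOn : StrictMonoOn lg (Set.Ioi 0)

/-- A prelogarithmic section of `k((G))`: an order-preserving group embedding
`l : (G, ·) → (k((G^{>1})), +)`. -/
structure IsPrelogSection (l : G → HahnSeries (gdual G) k) : Prop where
  supp_large : ∀ g : G, l g ∈ largeSeries k G
  map_mul : ∀ g h : G, l (g * h) = l g + l h
  strictMono : StrictMono l

/-- The prelogarithm associated to a prelogarithmic section `l` and a logarithm `lg` on the
residue field: `L(g·a·(1+ε)) = l(g) + log(a) + Σ (-1)^(i-1) ε^i/i`. -/
def prelogL (lg : k → k) (l : G → HahnSeries (gdual G) k)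
    (α : HahnSeries (gdual G) k) : HahnSeries (gdual G) k :=
  l (toG α.order) + HahnSeries.C (lg α.leadingCoeff) +
    logOneUnit ((HahnSeries.single α.order α.leadingCoeff)⁻¹ * α - 1)

/-- The group of exponentials `G^# = e[k((G^{>1}))]`, a multiplicative copy of the ordered
additive group `k((G^{>1}))`. The element `e(α)` is `Multiplicative.ofAdd ⟨α, _⟩`. -/
abbrev Gsharp (k : Type*) [Field k] [LinearOrder k] [IsStrictOrderedRing k] (G : Type*) [CommGroup G] [LinearOrder G] [IsOrderedMonoid G] :
    Type _ := Multiplicative ↥(largeSeries k G)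

/-- The embedding `ι : G → G^#`, `ι(g) := e(l(g))`. -/
def iotaSharp (l : G → HahnSeries (gdual G) k) (hl : ∀ g, l g ∈ largeSeries k G) (g : G) :
    Gsharp k G :=
  Multiplicative.ofAdd (⟨l g, hl g⟩ : ↥(largeSeries k G))

/-- The prelogarithmic section `l^#` of `k((G^#))`: `l^#(e(α)) := ι(α)`, where
`ι : k((G)) → k((G^#))` is the canonical extension of `ι : G → G^#`. -/
def lsharpFun (l : G → HahnSeries (gdual G) k) (hl : ∀ g, l g ∈ largeSeries k G)
    (x : Gsharp k G) : HahnSeries (gdual (Gsharp k G)) k :=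
  extMap (iotaSharp l hl) ((Multiplicative.toAdd x : ↥(largeSeries k G)) : HahnSeries (gdual G) k)

/-- The induced map `ψ^# : G₁^# → G₂^#`, `ψ^#(e(α)) := e(ψ(α))` (junk value `1` if the
canonical extension of `ψ` does not map `k((G₁^{>1}))` into `k((G₂^{>1}))`). -/
def psiSharp {k : Type*} [Field k] [LinearOrder k] [IsStrictOrderedRing k] {G₁ G₂ : Type*} [CommGroup G₁] [LinearOrder G₁] [IsOrderedMonoid G₁]
    [CommGroup G₂] [LinearOrder G₂] [IsOrderedMonoid G₂] (ψ : G₁ → G₂) (x : Gsharp k G₁) : Gsharp k G₂ :=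
  if h : ∀ f ∈ largeSeries k G₁, extMap ψ f ∈ largeSeries k G₂ then
    Multiplicative.ofAdd
      (⟨extMap ψ ((Multiplicative.toAdd x : ↥(largeSeries k G₁)) : HahnSeries (gdual G₁) k),
        h _ (Multiplicative.toAdd x).2⟩ : ↥(largeSeries k G₂))
  else 1

/-- Condition (†) for subgroups `U ⊆ H` of `G`:
`l(H) < |f|` for every nonzero `f ∈ k((H^{>U}))`. -/
def CondDagger (l : G → HahnSeries (gdual G) k) (U H : Subgroup G) : Prop :=
  ∀ h ∈ H, ∀ f : HahnSeries (gdual G) k, f ≠ 0 →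
    (∀ γ ∈ f.support, toG γ ∈ H ∧ ∀ u ∈ U, u < toG γ) → l h < |f|

/-- The growth axiom for a subgroup `H` of `G`:
`l(H) < |f|` for every nonzero `f ∈ k((H^{>1}))`. -/
def GrowthAxiom (l : G → HahnSeries (gdual G) k) (H : Subgroup G) : Prop :=
  CondDagger l (⊥ : Subgroup G) H

theorem mem_large_of_gt {f : HahnSeries (gdual G) k} {U H : Subgroup G}
    (hf : ∀ γ ∈ f.support, toG γ ∈ H ∧ ∀ u ∈ U, u < toG γ) : f ∈ largeSeries k G :=
  fun γ hγ => show (1 : G) < toG γ from (hf γ hγ).2 1 U.one_mem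

/-- The set `H^{#,U} = ι(H)·e[k((H^{>U}))] ⊆ G^#`. -/
def sharpProdSet (l : G → HahnSeries (gdual G) k) (hl : ∀ g, l g ∈ largeSeries k G)
    (U H : Subgroup G) : Set (Gsharp k G) :=
  {x | ∃ h ∈ H, ∃ f : HahnSeries (gdual G) k,
    ∃ hf : ∀ γ ∈ f.support, toG γ ∈ H ∧ ∀ u ∈ U, u < toG γ,
    x = iotaSharp l hl h *
      Multiplicative.ofAdd (⟨f, mem_large_of_gt hf⟩ : ↥(largeSeries k G))}

end Series

section Hahn

variable (k : Type*) [Field k] [LinearOrder k] [IsStrictOrderedRing k] {Γ : Type*} [LinearOrder Γ]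

/-- The Hahn group `Γ^k` of formal products `∏_γ x_γ^(g γ)` with anti well-ordered support,
ordered anti-lexicographically, realized as the multiplicative copy of the additive group of
Hahn series over `Γᵒᵈ` with coefficients in `k`. -/
abbrev HahnGroup (Γ : Type*) [LinearOrder Γ] (k : Type*) [Field k] [LinearOrder k] [IsStrictOrderedRing k] : Type _ :=
  Multiplicative (HahnSeries Γᵒᵈ k)

/-- The monomial `x_γ` in the Hahn group `Γ^k`. -/
def xMon (γ : Γ) : HahnGroup Γ k :=
  Multiplicative.ofAdd (HahnSeries.single (OrderDual.toDual γ) (1 : k))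

/-- The prelogarithmic section `l_σ` on `k((Γ^k))` induced by `σ : Γ → Γ`:
`l_σ(∏_γ x_γ^(g γ)) := Σ_γ (g γ)·x_(σ γ)` (junk value `0` if `σ` is not strictly
order-preserving). -/
def sigmaSection (σ : Γ → Γ) :
    HahnGroup Γ k → HahnSeries (gdual (HahnGroup Γ k)) k :=
  if hσ : StrictMono σ then fun g =>
    HahnSeries.embDomain
      (OrderEmbedding.ofStrictMono
        (fun γ : Γᵒᵈ => toGd (xMon k (σ (OrderDual.ofDual γ))))
        (fun a b hab =>
          show toGd (xMon k (σ (OrderDual.ofDual a))) < toGd (xMon k (σ (OrderDual.ofDual b)))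
          from hahn_single_lt_single
            (show OrderDual.toDual (σ (OrderDual.ofDual a)) <
                OrderDual.toDual (σ (OrderDual.ofDual b)) from
              hσ (show OrderDual.ofDual b < OrderDual.ofDual a from hab))))
      (Multiplicative.toAdd g)
  else fun _ => 0

/-- The lift `ψ_σ : Γ^k → Γ^k` of `σ : Γ → Γ`, `ψ_σ(∏_γ x_γ^(g γ)) := ∏_γ x_(σ γ)^(g γ)`
(junk value `id` if `σ` is not strictly order-preserving). -/
def sigmaAuto (σ : Γ → Γ) : HahnGroup Γ k → HahnGroup Γ k :=
  if hσ : StrictMono σ then fun g =>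
    Multiplicative.ofAdd
      (HahnSeries.embDomain
        (OrderEmbedding.ofStrictMono
          (fun γ : Γᵒᵈ => OrderDual.toDual (σ (OrderDual.ofDual γ)))
          (fun a b hab =>
            show OrderDual.toDual (σ (OrderDual.ofDual a)) <
                OrderDual.toDual (σ (OrderDual.ofDual b)) from
              hσ (show OrderDual.ofDual b < OrderDual.ofDual a from hab)))
        (Multiplicative.toAdd g))
  else id

end Hahn


/-! Every element of `H^{>1}` is `≥ h`, so a nonzero `f ∈ k((H^{>1}))` has `v(f) ≥ h`, while
`l(h^n) = n • l(h)` is supported inside the support of `l(h)`. Hence `v(l(h)) < h` makes every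
`l(h^n)` smaller than `|f|`. Conversely, if `v(l(h)) ≥ h` and `a > 0` is the leading coefficient
of `l(h)`, the monomial `(a/2)·h` lies in `k((H^{>1}))` but is smaller than `l(h)`. -/

section HahnOrderLemmas

variable {k : Type*} [Field k] {Γ' : Type*} [LinearOrder Γ']

theorem hahn_orderTop_le_orderTop_zsmul (n : ℤ) (x : HahnSeries Γ' k) :
    x.orderTop ≤ (n • x).orderTop := by
  rw [← Int.cast_smul_eq_zsmul k]
  exact HahnSeries.orderTop_le_orderTop_smul _ x

variable [LinearOrder k] [IsStrictOrderedRing k]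

theorem hahn_pos_iff {x : HahnSeries Γ' k} : 0 < x ↔ 0 < x.leadingCoeff := by
  rw [hahn_lt_iff, sub_zero]

theorem hahn_lt_of_orderTop_lt {x y : HahnSeries Γ' k} (hy : 0 < y)
    (hxy : y.orderTop < x.orderTop) : x < y := by
  rw [hahn_lt_iff, HahnSeries.leadingCoeff_sub hxy]
  exact hahn_pos_iff.1 hy

theorem hahn_single_lt_of_orderTop_le {x : HahnSeries Γ' k} {g : Γ'} {c : k} (hc : 0 < c)
    (hcx : c < x.leadingCoeff) (hxg : x.orderTop ≤ g) : HahnSeries.single g c < x := by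
  have hx : 0 < x := hahn_pos_iff.2 (hc.trans hcx)
  rcases hxg.lt_or_eq with hlt | heq
  · exact hahn_lt_of_orderTop_lt hx (by rwa [HahnSeries.orderTop_single hc.ne'])
  · set a := x.leadingCoeff
    have hsplit : x - HahnSeries.single g c =
        HahnSeries.single g (a - c) + (x - HahnSeries.single g a) := by
      rw [HahnSeries.single_sub]; abel
    have htail : (HahnSeries.single g (a - c)).orderTop < (x - HahnSeries.single g a).orderTop := by
      rw [HahnSeries.orderTop_single (sub_pos.2 hcx).ne']
      exact HahnSeries.le_orderTop_of_leadingCoeff_eq heq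
        (HahnSeries.orderTop_single (hc.trans hcx).ne') HahnSeries.leadingCoeff_of_single.symm
    rw [hahn_lt_iff, hsplit, HahnSeries.leadingCoeff_add_eq_left htail,
      HahnSeries.leadingCoeff_of_single]
    exact sub_pos.2 hcx

theorem hahn_orderTop_abs (x : HahnSeries Γ' k) : |x|.orderTop = x.orderTop := by
  rcases abs_choice x with hx | hx <;> rw [hx]
  exact HahnSeries.orderTop_neg

end HahnOrderLemmas

theorem le_of_mem_zpowers_of_one_lt {G : Type*} [CommGroup G] [LinearOrder G] [IsOrderedMonoid G]
    {h g : G} (hg : g ∈ Subgroup.zpowers h) (hg1 : 1 < g) : h ≤ g := by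
  rcases le_or_gt h 1 with hh | hh
  · exact hh.trans hg1.le
  obtain ⟨m, rfl⟩ := Subgroup.mem_zpowers_iff.1 hg
  have hm : 0 < m := (zpow_lt_zpow_iff_right hh).1 (by rwa [zpow_zero])
  simpa using (zpow_le_zpow_iff_right hh (m := 1)).2 hm

section GrowthAxiom

variable {k : Type*} [Field k] {G : Type*} [CommGroup G] [LinearOrder G] [IsOrderedMonoid G]

theorem toG_order_lt_iff {x : HahnSeries (gdual G) k} (hx : x ≠ 0) {g : G} :
    toG x.order < g ↔ ((toGd g : gdual G) : WithTop (gdual G)) < x.orderTop := by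
  rw [← HahnSeries.order_eq_orderTop_of_ne_zero hx, WithTop.coe_lt_coe]
  rfl

variable [LinearOrder k] [IsStrictOrderedRing k] {l : G → HahnSeries (gdual G) k}

theorem IsPrelogSection.map_zpow (hl : IsPrelogSection l) (g : G) (n : ℤ) :
    l (g ^ n) = n • l g :=
  map_zsmul (AddMonoidHom.mk' (fun a : Additive G => l a.toMul) fun _ _ => hl.map_mul _ _) n
    (.ofMul g)

theorem IsPrelogSection.pos (hl : IsPrelogSection l) {g : G} (hg : 1 < g) : 0 < l g := by
  have hl1 : l 1 = 0 := by simpa using hl.map_mul 1 1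
  simpa [hl1] using hl.strictMono hg

theorem growthAxiom_iff {H : Subgroup G} :
    GrowthAxiom l H ↔ ∀ h ∈ H, ∀ f : HahnSeries (gdual G) k, f ≠ 0 →
      (∀ γ ∈ f.support, toG γ ∈ H ∧ 1 < toG γ) → l h < |f| := by
  simp [GrowthAxiom, CondDagger, Subgroup.mem_bot]

theorem growthAxiom_zpowers_of_lt_orderTop (hl : IsPrelogSection l) {h : G}
    (hlh : ((toGd h : gdual G) : WithTop (gdual G)) < (l h).orderTop) :
    GrowthAxiom l (Subgroup.zpowers h) := by
  rw [growthAxiom_iff]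
  intro _ hn f hf hsupp
  obtain ⟨n, rfl⟩ := Subgroup.mem_zpowers_iff.1 hn
  have hvf : f.order ≤ toGd h := by
    obtain ⟨hmem, hgt⟩ :=
      hsupp _ ((HahnSeries.mem_support _ _).2 (mt HahnSeries.coeff_order_eq_zero.1 hf))
    exact (le_of_mem_zpowers_of_one_lt hmem hgt : h ≤ toG f.order)
  refine hahn_lt_of_orderTop_lt (abs_pos.2 hf) ?_
  calc |f|.orderTop = f.order := by
        rw [hahn_orderTop_abs, HahnSeries.order_eq_orderTop_of_ne_zero hf]
    _ ≤ toGd h := WithTop.coe_le_coe.2 hvf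
    _ < (l h).orderTop := hlh
    _ ≤ (l (h ^ n)).orderTop := hl.map_zpow h n ▸ hahn_orderTop_le_orderTop_zsmul n (l h)

theorem lt_orderTop_of_growthAxiom_zpowers (hl : IsPrelogSection l) {h : G} (hh : 1 < h)
    (hgrowth : GrowthAxiom l (Subgroup.zpowers h)) :
    ((toGd h : gdual G) : WithTop (gdual G)) < (l h).orderTop := by
  have hlc := hahn_pos_iff.1 (hl.pos hh)
  by_contra! hle
  set c := (l h).leadingCoeff / 2
  have hc : 0 < c := half_pos hlc
  have hsupp : ∀ γ ∈ (HahnSeries.single (toGd h) c).support,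
      toG γ ∈ Subgroup.zpowers h ∧ 1 < toG γ := by
    intro γ hγ
    rw [HahnSeries.support_single_of_ne hc.ne', Set.mem_singleton_iff] at hγ
    exact hγ ▸ ⟨Subgroup.mem_zpowers h, hh⟩
  have hlt := growthAxiom_iff.1 hgrowth h (Subgroup.mem_zpowers h) _
    (HahnSeries.single_ne_zero hc.ne') hsupp
  rw [abs_of_pos (hahn_pos_iff.2 (by rwa [HahnSeries.leadingCoeff_of_single]))] at hlt
  exact hlt.not_gt (hahn_single_lt_of_orderTop_le hc (half_lt_self hlc) hle)

end GrowthAxiom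

/-- Let `l` be a prelogarithmic section of `k((G))`, `h ∈ G` with
`h > 1`, and `H := {h^n : n ∈ ℤ}` the cyclic subgroup generated by `h`.  Then `H`
satisfies the growth axiom iff `v(l(h)) < h` in `G`. -/
theorem growth_axiom_cyclic_iff {k : Type*} [Field k] [LinearOrder k] [IsStrictOrderedRing k]
    {G : Type*} [CommGroup G] [LinearOrder G] [IsOrderedMonoid G]
    (l : G → HahnSeries (gdual G) k) (hl : IsPrelogSection l)
    (h : G) (hh : 1 < h) :
    GrowthAxiom l (Subgroup.zpowers h) ↔ toG ((l h).order) < h := by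
  rw [toG_order_lt_iff (hl.pos hh).ne']
  exact ⟨lt_orderTop_of_growthAxiom_zpowers hl hh, growthAxiom_zpowers_of_lt_orderTop hl⟩
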